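/- (Closed-loop error decomposition under time-varying longitudinal and lateral slip.) Let v_ref, ω_ref, a_l, a_r : ℝ → ℝ be differentiable with a_l(t), a_r(t) > 0, let σ : ℝ → ℝ, and let â_l, â_r : ℝ → ℝ be differentiable estimates. Suppose q_ref = (x_ref, y_ref, θ_ref) satisfies q_ref′ = (v_ref·cos θ_ref, v_ref·sin θ_ref, ω_ref), and q_p = (x_p, y_p, θ_p) satisfies the lateral-slip kinematics q_p′ = ((cos θ_p + σ·sin θ_p)·v_x, (sin θ_p − σ·cos θ_p)·v_x, ω), where the actual robot velocities produced by the adaptive control are v_x = (1/2)·((â_l/a_l)·Ω₂ + (â_r/a_r)·Ω₁) and ω = (1/b)·((â_r/a_r)·Ω₁ − (â_l/a_l)·Ω₂), with Ω₁, Ω₂ built from the pose error as in the context. Define the pose error (e₁, e₂, e₃) by the body-frame rotation of q_ref − q_p, set ã_l = â_l − a_l, ã_r = â_r − a_r, and suppose â_l, â_r satisfy the update rule â_l′ = γ₁·Ω₂·(Ω₄·e₁ − ((e₁ + k₃)/b)·(e₂ + k₃e₃) − sin e₃/(b·k₂)) and â_r′ = γ₂·Ω₁·(−Ω₃·e₁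 + ((e₁ + k₃)/b)·(e₂ + k₃e₃) + sin e₃/(b·k₂)). Then the augmented error e_a = (e₁, e₂, e₃, ã_l, ã_r) satisfies e_a′(t) = f_a(t, e_a(t)) + g(t, e_a(t)) + g_n(t, e_a(t)), with f_a, g, g_n as defined in the context. -/

import Mathlib

set_option maxHeartbeats 2000000


/-- The nominal closed-loop error vector field `f_a(t, e_a)` with time-varying reference
inputs `v_ref, ω_ref` and longitudinal slip parameters `a_l, a_r`. -/
noncomputable def fA (b k1 k2 k3 γ1 γ2 : ℝ) (vref ωref al ar : ℝ → ℝ) (t : ℝ)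
    (e : EuclideanSpace ℝ (Fin 5)) : EuclideanSpace ℝ (Fin 5) :=
  let e1 := e 0
  let e2 := e 1
  let e3 := e 2
  let tl := e 3
  let tr := e 4
  let ωc := ωref t + (vref t / 2) * (k2 * (e2 + k3 * e3) + (1 / k3) * Real.sin e3)
  let vc := vref t * Real.cos e3 - k3 * e3 * ωc + k1 * e1
  let Δr := 1 + tr / ar t
  let Δl := 1 + tl / al t
  let Ω1 := vc + (b / 2) * ωc
  let Ω2 := vc - (b / 2) * ωc
  let Ω3 := e2 / b - 1 / 2
  let Ω4 := e2 / b + 1 / 2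
  (WithLp.equiv 2 (Fin 5 → ℝ)).symm
    ![Δr * Ω3 * Ω1 + vref t * Real.cos e3 - Δl * Ω4 * Ω2,
      Δl * Ω2 * e1 / b + vref t * Real.sin e3 - Δr * Ω1 * e1 / b,
      ωref t - Δr * Ω1 / b + Δl * Ω2 / b,
      γ1 * Ω2 * (Ω4 * e1 - ((e1 + k3) / b) * (e2 + k3 * e3) - Real.sin e3 / (b * k2)),
      γ2 * Ω1 * (-(Ω3 * e1) + ((e1 + k3) / b) * (e2 + k3 * e3) + Real.sin e3 / (b * k2))]

/-- The vanishing lateral-slip perturbation `g(t, e_a)`. -/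
noncomputable def gP (b k1 k2 k3 : ℝ) (vref ωref al ar σ : ℝ → ℝ) (t : ℝ)
    (e : EuclideanSpace ℝ (Fin 5)) : EuclideanSpace ℝ (Fin 5) :=
  let e1 := e 0
  let e2 := e 1
  let e3 := e 2
  let tl := e 3
  let tr := e 4
  let ωc := ωref t + (vref t / 2) * (k2 * (e2 + k3 * e3) + (1 / k3) * Real.sin e3)
  let vc := vref t * Real.cos e3 - k3 * e3 * ωc + k1 * e1
  let Ω1 := vc + (b / 2) * ωc
  let Ω2 := vc - (b / 2) * ωc
  (WithLp.equiv 2 (Fin 5 → ℝ)).symm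
    ![0,
      σ t * ((1 / 2) * (tl / al t) * Ω2 + (1 / 2) * (tr / ar t) * Ω1 - k3 * e3 * ωc + k1 * e1),
      0, 0, 0]

/-- The nonvanishing perturbation `g_n(t, e_a)`. -/
noncomputable def gN (vref al ar σ : ℝ → ℝ) (t : ℝ)
    (e : EuclideanSpace ℝ (Fin 5)) : EuclideanSpace ℝ (Fin 5) :=
  (WithLp.equiv 2 (Fin 5 → ℝ)).symm
    ![0, σ t * vref t * Real.cos (e 2), 0, -deriv al t, -deriv ar t]

/-- closed-loop error decomposition under time-varying longitudinal and lateral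
slip: the augmented error satisfies `e_a′(t) = f_a(t, e_a(t)) + g(t, e_a(t)) + g_n(t, e_a(t))`. -/
theorem stmt11 (b k1 k2 k3 γ1 γ2 : ℝ)
    (hb : 0 < b) (hk1 : 0 < k1) (hk2 : 0 < k2) (hk3 : 0 < k3)
    (hγ1 : 0 < γ1) (hγ2 : 0 < γ2)
    (vref ωref al ar σ hatl hatr : ℝ → ℝ)
    (xref yref θref xp yp θp : ℝ → ℝ)
    (E1 E2 E3 ωc vc Ω1 Ω2 Ω3 Ω4 vx ωb : ℝ → ℝ)
    (ea : ℝ → EuclideanSpace ℝ (Fin 5))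
    (hal : ∀ t, 0 < al t) (har : ∀ t, 0 < ar t)
    (hvrefd : Differentiable ℝ vref) (hωrefd : Differentiable ℝ ωref)
    (hald : Differentiable ℝ al) (hard : Differentiable ℝ ar)
    -- reference trajectory kinematics
    (hxref : ∀ t, HasDerivAt xref (vref t * Real.cos (θref t)) t)
    (hyref : ∀ t, HasDerivAt yref (vref t * Real.sin (θref t)) t)
    (hθref : ∀ t, HasDerivAt θref (ωref t) t)
    -- body-frame pose error
    (hE1 : E1 = fun t => Real.cos (θp t) * (xref t - xp t) + Real.sin (θp t) * (yref t - yp t))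
    (hE2 : E2 = fun t => -Real.sin (θp t) * (xref t - xp t) + Real.cos (θp t) * (yref t - yp t))
    (hE3 : E3 = fun t => θref t - θp t)
    -- kinematic control law
    (hωc : ωc = fun t => ωref t + (vref t / 2) * (k2 * (E2 t + k3 * E3 t)
      + (1 / k3) * Real.sin (E3 t)))
    (hvc : vc = fun t => vref t * Real.cos (E3 t) - k3 * E3 t * ωc t + k1 * E1 t)
    (hΩ1 : Ω1 = fun t => vc t + (b / 2) * ωc t)
    (hΩ2 : Ω2 = fun t => vc t - (b / 2) * ωc t)
    (hΩ3 : Ω3 = fun t => E2 t / b - 1 / 2)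
    (hΩ4 : Ω4 = fun t => E2 t / b + 1 / 2)
    -- actual robot velocities produced by the adaptive control
    (hvx : vx = fun t => (1 / 2) * ((hatl t / al t) * Ω2 t + (hatr t / ar t) * Ω1 t))
    (hωb : ωb = fun t => (1 / b) * ((hatr t / ar t) * Ω1 t - (hatl t / al t) * Ω2 t))
    -- robot kinematics with lateral slip
    (hxp : ∀ t, HasDerivAt xp ((Real.cos (θp t) + σ t * Real.sin (θp t)) * vx t) t)
    (hyp : ∀ t, HasDerivAt yp ((Real.sin (θp t) - σ t * Real.cos (θp t)) * vx t) t)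
    (hθp : ∀ t, HasDerivAt θp (ωb t) t)
    -- adaptive update rule for the slip estimates
    (hhatl : ∀ t, HasDerivAt hatl (γ1 * Ω2 t * (Ω4 t * E1 t
      - ((E1 t + k3) / b) * (E2 t + k3 * E3 t) - Real.sin (E3 t) / (b * k2))) t)
    (hhatr : ∀ t, HasDerivAt hatr (γ2 * Ω1 t * (-(Ω3 t * E1 t)
      + ((E1 t + k3) / b) * (E2 t + k3 * E3 t) + Real.sin (E3 t) / (b * k2))) t)
    -- augmented error vector
    (hea : ea = fun t => (WithLp.equiv 2 (Fin 5 → ℝ)).symm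
      ![E1 t, E2 t, E3 t, hatl t - al t, hatr t - ar t]) :
    ∀ t, HasDerivAt ea
      (fA b k1 k2 k3 γ1 γ2 vref ωref al ar t (ea t)
        + gP b k1 k2 k3 vref ωref al ar σ t (ea t)
        + gN vref al ar σ t (ea t)) t := by
  intro t
  -- component derivatives
  have hbne : b ≠ 0 := hb.ne'
  have halne : al t ≠ 0 := (hal t).ne'
  have harne : ar t ≠ 0 := (har t).ne'
  have hE1' : HasDerivAt E1 (ωb t * E2 t + vref t * Real.cos (E3 t) - vx t) t := by
    rw [hE1]
    have h := ((hθp t).cos.mul ((hxref t).sub (hxp t))).add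
      ((hθp t).sin.mul ((hyref t).sub (hyp t)))
    refine h.congr_deriv (Eq.symm ?_)
    rw [hE2, hE3]
    simp only [Real.cos_sub, Pi.sub_apply]
    linear_combination (vx t) * Real.sin_sq_add_cos_sq (θp t)
  have hE2' : HasDerivAt E2 (-(ωb t * E1 t) + vref t * Real.sin (E3 t) + σ t * vx t) t := by
    rw [hE2]
    have h := (((hθp t).sin.neg).mul ((hxref t).sub (hxp t))).add
      ((hθp t).cos.mul ((hyref t).sub (hyp t)))
    refine h.congr_deriv (Eq.symm ?_)
    rw [hE1, hE3]
    simp only [Real.sin_sub, Pi.sub_apply, Pi.neg_apply]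
    linear_combination (-(σ t * vx t)) * Real.sin_sq_add_cos_sq (θp t)
  have hE3' : HasDerivAt E3 (ωref t - ωb t) t := by
    rw [hE3]; exact (hθref t).sub (hθp t)
  have hL' : HasDerivAt (fun s => hatl s - al s)
      (γ1 * Ω2 t * (Ω4 t * E1 t - ((E1 t + k3) / b) * (E2 t + k3 * E3 t)
        - Real.sin (E3 t) / (b * k2)) - deriv al t) t :=
    (hhatl t).sub (hald t).hasDerivAt
  have hR' : HasDerivAt (fun s => hatr s - ar s)
      (γ2 * Ω1 t * (-(Ω3 t * E1 t) + ((E1 t + k3) / b) * (E2 t + k3 * E3 t)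
        + Real.sin (E3 t) / (b * k2)) - deriv ar t) t :=
    (hhatr t).sub (hard t).hasDerivAt
  have hpi : HasDerivAt
      (fun s => (![E1 s, E2 s, E3 s, hatl s - al s, hatr s - ar s] : Fin 5 → ℝ))
      (![ωb t * E2 t + vref t * Real.cos (E3 t) - vx t,
         -(ωb t * E1 t) + vref t * Real.sin (E3 t) + σ t * vx t,
         ωref t - ωb t,
         γ1 * Ω2 t * (Ω4 t * E1 t - ((E1 t + k3) / b) * (E2 t + k3 * E3 t)
           - Real.sin (E3 t) / (b * k2)) - deriv al t,
         γ2 * Ω1 t * (-(Ω3 t * E1 t) + ((E1 t + k3) / b) * (E2 t + k3 * E3 t)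
           + Real.sin (E3 t) / (b * k2)) - deriv ar t]) t := by
    rw [hasDerivAt_pi]
    intro i
    fin_cases i <;>
      simp only [Matrix.cons_val_zero, Matrix.cons_val_one, Matrix.head_cons,
        Matrix.cons_val_two, Matrix.tail_cons, Matrix.cons_val_three, Matrix.cons_val_four,
        Fin.isValue]
    · exact hE1'
    · exact hE2'
    · exact hE3'
    · exact hL'
    · exact hR'
  have hcomp := ((EuclideanSpace.equiv (Fin 5) ℝ).symm.toContinuousLinearMap.hasFDerivAt).comp_hasDerivAt t hpi
  have hfun : ea = (fun s => (EuclideanSpace.equiv (Fin 5) ℝ).symm.toContinuousLinearMap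
      (![E1 s, E2 s, E3 s, hatl s - al s, hatr s - ar s])) := by
    rw [hea]; rfl
  rw [hfun]
  refine hcomp.congr_deriv ?_
  ext i
  have hw : ∀ (v : Fin 5 → ℝ), ((EuclideanSpace.equiv (Fin 5) ℝ).symm.toContinuousLinearMap v : EuclideanSpace ℝ (Fin 5)) = (WithLp.equiv 2 (Fin 5 → ℝ)).symm v := fun _ => rfl
  simp only [ContinuousLinearEquiv.coe_coe, EuclideanSpace.equiv,
    PiLp.continuousLinearEquiv_symm_apply] at hw ⊢
  simp only [fA, gP, gN, PiLp.add_apply, WithLp.equiv_symm_apply, PiLp.toLp_apply]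
  fin_cases i <;>
    simp only [Matrix.cons_val_zero, Matrix.cons_val_one, Matrix.head_cons,
      Matrix.cons_val_two, Matrix.tail_cons, Matrix.cons_val_three, Matrix.cons_val_four,
      Fin.isValue, Fin.reduceFinMk, Matrix.cons_val] <;>
    simp only [hωb, hvx, hΩ1, hΩ2, hΩ3, hΩ4, hvc, hωc] <;>
    field_simp <;>
    ring
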